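/- arXiv:2107.14785 — 3 statements merged into one kernel-verified Lean document; each statement's English description precedes it below -/
import Mathlib

section
/- Let Γ be a finite tree on [n] rooted at v. The collection C_v = {I_x : x ∈ [n]} is a maximal nested collection on [n]: (1) any two sets in C_v are either nested or disjoint; (2) if finitely many sets in C_v are pairwise disjoint, then they are exactly the connected components of their union; (3) the union of the sets in C_v is [n]; and (4) no connected subset S ⊆ [n] not already in C_v can be added to C_v while preserving properties (1) and (2). -/
open SimpleGraph

/-- `tle G v x y` : `x ≤ y` in the tree rooted at `v`, i.e. `y` lies on the
(unique) path from `x` to the root `v`. -/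
def tle {n : ℕ} (G : SimpleGraph (Fin n)) (v x y : Fin n) : Prop :=
  ∀ p : G.Path x v, y ∈ p.1.support

/-- strict order -/
def tlt {n : ℕ} (G : SimpleGraph (Fin n)) (v x y : Fin n) : Prop :=
  tle G v x y ∧ x ≠ y

/-- `I_x` : the set of vertices `y ≤ x`, the subtree hanging below `x`. -/
def Iset {n : ℕ} (G : SimpleGraph (Fin n)) (v x : Fin n) : Set (Fin n) :=
  {y | tle G v y x}

/-- `covRel G v x y` : `y` covers `x` (`x ⋖ y`), i.e. they are adjacent and `x < y`. -/
def covRel {n : ℕ} (G : SimpleGraph (Fin n)) (v x y : Fin n) : Prop :=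
  G.Adj x y ∧ tlt G v x y


/-- `C` is a connected component of the subgraph of `G` induced on `U`:
a maximal connected subset of `U`. -/
def isCompOf {n : ℕ} (G : SimpleGraph (Fin n)) (C U : Set (Fin n)) : Prop :=
  C ⊆ U ∧ (G.induce C).Connected ∧
    ∀ D : Set (Fin n), C ⊆ D → D ⊆ U → (G.induce D).Connected → D = C


/-- A nested collection: any two members are nested or disjoint, and every pairwise
disjoint subfamily consists exactly of the connected components of its union. -/
def nestedColl {n : ℕ} (G : SimpleGraph (Fin n)) (C : Set (Set (Fin n))) : Prop :=
  (∀ A ∈ C, ∀ B ∈ C, A ⊆ B ∨ B ⊆ A ∨ A ∩ B = ∅) ∧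
  (∀ D ⊆ C, (∀ A ∈ D, ∀ B ∈ D, A ≠ B → A ∩ B = ∅) →
    ∀ X : Set (Fin n), isCompOf G X (⋃₀ D) ↔ X ∈ D)

section Aux


variable {n : ℕ} {G : SimpleGraph (Fin n)}

noncomputable def pth (hT : G.IsTree) (x y : Fin n) : G.Walk x y :=
  (hT.existsUnique_path x y).exists.choose

lemma pth_isPath (hT : G.IsTree) (x y : Fin n) : (pth hT x y).IsPath :=
  (hT.existsUnique_path x y).exists.choose_spec

lemma pth_eq (hT : G.IsTree) {x y : Fin n} {p : G.Walk x y} (hp : p.IsPath) :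
    p = pth hT x y :=
  ((hT.existsUnique_path x y).unique hp (pth_isPath hT x y))

lemma tle_iff (hT : G.IsTree) {v x y : Fin n} :
    tle G v x y ↔ y ∈ (pth hT x v).support := by
  constructor
  · intro h; exact h ⟨pth hT x v, pth_isPath hT x v⟩
  · intro h p
    have : p.1 = pth hT x v := pth_eq hT p.2
    rw [this]; exact h

lemma tle_of_mem (hT : G.IsTree) {v x y : Fin n} {p : G.Walk x v} (hp : p.IsPath)
    (hy : y ∈ p.support) : tle G v x y := by
  rw [tle_iff hT, ← pth_eq hT hp]; exact hy

lemma tle_refl (v x : Fin n) : tle G v x x :=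
  fun p => p.1.start_mem_support

lemma tle_top (v x : Fin n) : tle G v x v :=
  fun p => p.1.end_mem_support

lemma tle_trans (hT : G.IsTree) {v x y z : Fin n} (h1 : tle G v x y) (h2 : tle G v y z) :
    tle G v x z := by
  intro p
  have hy := h1 p
  have hd : (p.1.dropUntil y hy).IsPath := p.2.dropUntil hy
  have := h2 ⟨p.1.dropUntil y hy, hd⟩
  exact p.1.support_dropUntil_subset hy this

lemma mem_take_drop {x z v w : Fin n} {p : G.Walk z v} (hp : p.IsPath)
    (hx : x ∈ p.support) (h1 : w ∈ (p.takeUntil x hx).support)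
    (h2 : w ∈ (p.dropUntil x hx).support) : w = x := by
  by_contra hne
  have hnd : p.support.Nodup := hp.support_nodup
  rw [← p.take_spec hx, Walk.support_append, List.nodup_append] at hnd
  have hw : w ∈ ((p.dropUntil x hx).support).tail := by
    rw [(p.dropUntil x hx).support_eq_cons] at h2
    rcases List.mem_cons.1 h2 with h | h
    · exact absurd h hne
    · exact h
  exact hnd.2.2 w h1 w hw rfl

lemma tle_antisymm (hT : G.IsTree) {v x y : Fin n} (h1 : tle G v x y) (h2 : tle G v y x) :
    x = y := by
  set p := pth hT x v with hpdef
  have hpp : p.IsPath := pth_isPath hT x v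
  have hy : y ∈ p.support := (tle_iff hT).1 h1
  have hd : (p.dropUntil y hy).IsPath := hpp.dropUntil hy
  have hx : x ∈ (p.dropUntil y hy).support := h2 ⟨p.dropUntil y hy, hd⟩
  have hx' : x ∈ (p.takeUntil y hy).support := (p.takeUntil y hy).start_mem_support
  exact mem_take_drop hpp hy hx' hx

lemma isPath_append' {a b c : Fin n} {p : G.Walk a b} {q : G.Walk b c}
    (hp : p.IsPath) (hq : q.IsPath)
    (hd : ∀ x, x ∈ p.support → x ∈ q.support → x = b) : (p.append q).IsPath := by
  rw [Walk.isPath_def, Walk.support_append, List.nodup_append]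
  refine ⟨hp.support_nodup, hq.support_nodup.tail, ?_⟩
  intro x hxp y hxt hxy; subst hxy
  have hxq : x ∈ q.support := List.mem_of_mem_tail hxt
  have hb : x = b := hd x hxp hxq
  subst hb
  have hnd : q.support.Nodup := hq.support_nodup
  rw [q.support_eq_cons] at hnd
  exact (List.nodup_cons.1 hnd).1 hxt

lemma tle_comparable (hT : G.IsTree) {v x y z : Fin n}
    (h1 : tle G v z x) (h2 : tle G v z y) : tle G v x y ∨ tle G v y x := by
  set p := pth hT z v with hpdef
  have hpp : p.IsPath := pth_isPath hT z v
  have hx : x ∈ p.support := (tle_iff hT).1 h1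
  have hy : y ∈ p.support := (tle_iff hT).1 h2
  rw [← p.take_spec hx, Walk.mem_support_append_iff] at hy
  rcases hy with hy | hy
  · -- y on the z→x part : x on unique path y→v
    right
    have htk : (p.takeUntil x hx).IsPath := hpp.takeUntil hx
    have hdp : (p.dropUntil x hx).IsPath := hpp.dropUntil hx
    set q := (p.takeUntil x hx).dropUntil y hy with hq
    have hqp : q.IsPath := htk.dropUntil hy
    have happ : (q.append (p.dropUntil x hx)).IsPath := by
      apply isPath_append' hqp hdp
      intro w hw1 hw2
      exact mem_take_drop hpp hx ((p.takeUntil x hx).support_dropUntil_subset hy hw1) hw2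
    apply tle_of_mem hT happ
    rw [Walk.mem_support_append_iff]
    exact Or.inr (p.dropUntil x hx).start_mem_support
  · left
    exact tle_of_mem hT (hpp.dropUntil hx) hy

lemma Iset_mono (hT : G.IsTree) {v x y : Fin n} (h : tle G v x y) :
    Iset G v x ⊆ Iset G v y := fun z hz => tle_trans hT hz h

lemma self_mem_Iset (v x : Fin n) : x ∈ Iset G v x := tle_refl v x

/-- every vertex on the segment from z up to x is ≤ x. -/
lemma seg_le (hT : G.IsTree) {v x z : Fin n} (hx : x ∈ (pth hT z v).support) :
    ∀ w ∈ ((pth hT z v).takeUntil x hx).support, tle G v w x := by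
  intro w hw
  have hpp : (pth hT z v).IsPath := pth_isPath hT z v
  have htk : ((pth hT z v).takeUntil x hx).IsPath := hpp.takeUntil hx
  have hdp : ((pth hT z v).dropUntil x hx).IsPath := hpp.dropUntil hx
  set q := ((pth hT z v).takeUntil x hx).dropUntil w hw with hq
  have hqp : q.IsPath := htk.dropUntil hw
  have happ : (q.append ((pth hT z v).dropUntil x hx)).IsPath := by
    apply isPath_append' hqp hdp
    intro u hu1 hu2
    exact mem_take_drop hpp hx (((pth hT z v).takeUntil x hx).support_dropUntil_subset hw hu1) hu2
  apply tle_of_mem hT happ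
  rw [Walk.mem_support_append_iff]
  exact Or.inr ((pth hT z v).dropUntil x hx).start_mem_support

/-- lifting a walk with support in T to reachability in the induced graph. -/
lemma reach_up {T : Set (Fin n)} :
    ∀ {a b : Fin n} (W : G.Walk a b), (∀ x ∈ W.support, x ∈ T) →
      ∀ (ha : a ∈ T) (hb : b ∈ T), (G.induce T).Reachable ⟨a, ha⟩ ⟨b, hb⟩ := by
  intro a b W
  induction W with
  | nil => intro _ ha hb; rfl
  | cons h W ih =>
    rename_i u c d
    intro hsup ha hb
    have hc : c ∈ T := hsup c (by simp [Walk.support_cons])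
    have hadj : (G.induce T).Adj ⟨u, ha⟩ ⟨c, hc⟩ := by
      simp only [comap_adj, Function.Embedding.coe_subtype]
      exact h
    exact hadj.reachable.trans (ih (fun x hx => hsup x (by simp [Walk.support_cons, hx])) hc hb)

/-- projecting a walk in the induced graph down to G. -/
lemma walk_down {T : Set (Fin n)} :
    ∀ {a b : ↥T} (_ : (G.induce T).Walk a b),
      ∃ W : G.Walk a.val b.val, ∀ x ∈ W.support, x ∈ T := by
  intro a b W
  induction W with
  | nil =>
    rename_i u
    exact ⟨Walk.nil, by rintro x hx; simp at hx; subst hx; exact u.2⟩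
  | cons h W ih =>
    rename_i u c d
    obtain ⟨W', hW'⟩ := ih
    have hadj : G.Adj u.val c.val := h
    refine ⟨Walk.cons hadj W', ?_⟩
    intro x hx
    rw [Walk.support_cons, List.mem_cons] at hx
    rcases hx with rfl | hx
    · exact u.2
    · exact hW' x hx

/-- any two points of T joined in G by a walk inside T are reachable in induce T;
conversely walks project. Connectivity of Iset. -/
lemma Iset_connected (hT : G.IsTree) (v x : Fin n) : (G.induce (Iset G v x)).Connected := by
  have hx : x ∈ Iset G v x := self_mem_Iset v x
  rw [connected_iff]
  refine ⟨?_, ⟨⟨x, hx⟩⟩⟩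
  · rintro ⟨a, ha⟩ ⟨b, hb⟩
    have key : ∀ (c : Fin n) (hc : c ∈ Iset G v x),
        (G.induce (Iset G v x)).Reachable ⟨c, hc⟩ ⟨x, hx⟩ := by
      intro c hc
      have hmem : x ∈ (pth hT c v).support := (tle_iff hT).1 hc
      exact reach_up ((pth hT c v).takeUntil x hmem) (seg_le hT hmem) hc hx
    exact (key a ha).trans (key b hb).symm

/-- the parent of a non-root vertex. -/
lemma exists_parent (hT : G.IsTree) {v x : Fin n} (hx : x ≠ v) :
    ∃ w, G.Adj x w ∧ tle G v x w ∧ w ≠ x ∧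
      (∀ y, tle G v x y → x = y ∨ tle G v w y) ∧
      (pth hT w v).length < (pth hT x v).length := by
  obtain ⟨w, h, q, hq⟩ := Walk.exists_eq_cons_of_ne hx (pth hT x v)
  have hpp : (pth hT x v).IsPath := pth_isPath hT x v
  rw [hq, Walk.cons_isPath_iff] at hpp
  have hqeq : q = pth hT w v := pth_eq hT hpp.1
  refine ⟨w, h, ?_, ?_, ?_, ?_⟩
  · rw [tle_iff hT, hq, Walk.support_cons]
    exact List.mem_cons.2 (Or.inr q.start_mem_support)
  · intro hwx; subst hwx; exact hpp.2 q.start_mem_support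
  · intro y hy
    have : y ∈ (pth hT x v).support := (tle_iff hT).1 hy
    rw [hq, Walk.support_cons, List.mem_cons] at this
    rcases this with rfl | hmem
    · exact Or.inl rfl
    · exact Or.inr (tle_of_mem hT hpp.1 hmem)
  · rw [hq, ← hqeq]; simp [Walk.length_cons]

/-- boundary lemma: an edge leaving Iset x must start at x and go to the parent. -/
lemma boundary (hT : G.IsTree) {v x a b : Fin n} (ha : a ∈ Iset G v x)
    (hadj : G.Adj a b) (hb : b ∉ Iset G v x) : a = x ∧ tle G v x b := by
  set r := pth hT b v with hr
  have hrp : r.IsPath := pth_isPath hT b v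
  by_cases hmem : a ∈ r.support
  · exfalso
    exact hb (tle_trans hT (tle_of_mem hT hrp hmem) ha)
  · have hcons : (Walk.cons hadj r).IsPath := (Walk.cons_isPath_iff _ _).2 ⟨hrp, hmem⟩
    have hax : x ∈ (Walk.cons hadj r).support := ha ⟨_, hcons⟩
    rw [Walk.support_cons, List.mem_cons] at hax
    rcases hax with rfl | hmem2
    · refine ⟨rfl, tle_of_mem hT hcons ?_⟩
      rw [Walk.support_cons]
      exact List.mem_cons.2 (Or.inr r.start_mem_support)
    · exact absurd (tle_of_mem hT hrp hmem2) hb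

/-- a walk inside the union of a pairwise disjoint family of Isets,
starting inside Iset a, stays inside Iset a. -/
lemma stay (hT : G.IsTree) {v a : Fin n} {D : Set (Set (Fin n))}
    (hD : D ⊆ Set.range (Iset G v)) (hdisj : ∀ A ∈ D, ∀ B ∈ D, A ≠ B → A ∩ B = ∅)
    (haD : Iset G v a ∈ D) {U : Set (Fin n)} (hU : U ⊆ ⋃₀ D) :
    ∀ {c d : ↥U} (_ : (G.induce U).Walk c d), c.val ∈ Iset G v a → d.val ∈ Iset G v a := by
  intro c d W
  induction W with
  | nil => exact id
  | cons h W ih =>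
    rename_i p e q
    intro hc
    apply ih
    by_contra he
    have hadj : G.Adj p.val e.val := h
    obtain ⟨rfl2, hle⟩ := boundary hT hc hadj he
    obtain ⟨B, hBD, heB⟩ := hU e.2
    obtain ⟨b, rfl⟩ := hD hBD
    have hab : tle G v a b := tle_trans hT hle heB
    have hne : Iset G v a ≠ Iset G v b := by
      intro hEq; rw [← hEq] at heB; exact he heB
    have := hdisj _ haD _ hBD hne
    have haa : a ∈ Iset G v a ∩ Iset G v b := ⟨self_mem_Iset v a, hab⟩
    rw [this] at haa
    exact haa

end Aux

/-- The rooted cluster is a maximal nested collection on the whole vertex set. -/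
theorem rooted_cluster_maximal_nested {n : ℕ} (G : SimpleGraph (Fin n)) (hT : G.IsTree)
    (v : Fin n) :
    nestedColl G (Set.range (Iset G v)) ∧
    ⋃₀ Set.range (Iset G v) = Set.univ ∧
    ∀ S : Set (Fin n), (G.induce S).Connected → S ∉ Set.range (Iset G v) →
      ¬ nestedColl G (insert S (Set.range (Iset G v))) := by
  refine ⟨⟨?_, ?_⟩, ?_, ?_⟩
  · -- nested or disjoint
    rintro A ⟨a, rfl⟩ B ⟨b, rfl⟩
    by_cases hAB : (Iset G v a ∩ Iset G v b) = ∅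
    · exact Or.inr (Or.inr hAB)
    · obtain ⟨z, hza, hzb⟩ := Set.nonempty_iff_ne_empty.2 hAB
      rcases tle_comparable hT hza hzb with h | h
      · exact Or.inl (Iset_mono hT h)
      · exact Or.inr (Or.inl (Iset_mono hT h))
  · -- components
    intro D hD hdisj X
    constructor
    · rintro ⟨hXU, hXconn, hXmax⟩
      obtain ⟨⟨u, hu⟩⟩ := hXconn.nonempty
      obtain ⟨B, hBD, huB⟩ := hXU hu
      obtain ⟨a, rfl⟩ := hD hBD
      have hXsub : X ⊆ Iset G v a := by
        intro z hz
        obtain ⟨W⟩ := hXconn.preconnected ⟨u, hu⟩ ⟨z, hz⟩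
        exact stay hT hD hdisj hBD hXU W huB
      have := hXmax (Iset G v a) hXsub (Set.subset_sUnion_of_mem hBD) (Iset_connected hT v a)
      rw [← this]; exact hBD
    · intro hXD
      obtain ⟨a, ha⟩ := hD hXD
      subst ha
      refine ⟨Set.subset_sUnion_of_mem hXD, Iset_connected hT v a, ?_⟩
      intro D' hsub hsub' hconn
      apply Set.Subset.antisymm ?_ hsub
      intro z hz
      have ha' : a ∈ D' := hsub (self_mem_Iset v a)
      obtain ⟨W⟩ := hconn.preconnected ⟨a, ha'⟩ ⟨z, hz⟩
      exact stay hT hD hdisj hXD hsub' W (self_mem_Iset v a)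
  · -- union is everything
    ext y; simp only [Set.mem_sUnion, Set.mem_univ, iff_true, Set.mem_range]
    exact ⟨Iset G v y, ⟨y, rfl⟩, self_mem_Iset v y⟩
  · -- maximality
    intro S hSconn hSnr hnc
    obtain ⟨⟨s0, hs0⟩⟩ := hSconn.nonempty
    have pcl : ∀ a ∈ S, ∀ b ∈ S, ∀ w ∈ (pth hT a b).support, w ∈ S := by
      intro a ha b hb w hw
      obtain ⟨W⟩ := hSconn.preconnected ⟨a, ha⟩ ⟨b, hb⟩
      obtain ⟨W', hW'⟩ := walk_down W
      have hbp : W'.bypass = pth hT a b := pth_eq hT W'.bypass_isPath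
      rw [← hbp] at hw
      exact hW' w (W'.support_bypass_subset hw)
    obtain ⟨m, hmS, hmmin⟩ := Set.exists_min_image S (fun s => (pth hT s v).length)
      (Set.toFinite S) ⟨s0, hs0⟩
    have hSm : ∀ s ∈ S, tle G v s m := by
      intro s hs
      have hq : (pth hT s m).IsPath := pth_isPath hT s m
      have hr : (pth hT m v).IsPath := pth_isPath hT m v
      have happ : ((pth hT s m).append (pth hT m v)).IsPath := by
        apply isPath_append' hq hr
        intro x hxq hxr
        by_contra hxm
        have hxS : x ∈ S := pcl s hs m hmS x hxq
        have hxd : pth hT x v = (pth hT m v).dropUntil x hxr :=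
          (pth_eq hT (hr.dropUntil hxr)).symm
        have hlsum := congrArg Walk.length ((pth hT m v).take_spec hxr)
        rw [Walk.length_append] at hlsum
        have hpos : 0 < ((pth hT m v).takeUntil x hxr).length := by
          rcases Nat.eq_zero_or_pos ((pth hT m v).takeUntil x hxr).length with h0 | h
          · exact absurd (Walk.eq_of_length_eq_zero h0).symm hxm
          · exact h
        have hlen : (pth hT x v).length < (pth hT m v).length := by
          rw [hxd]; omega
        exact absurd (hmmin x hxS) (not_le.2 hlen)
      refine tle_of_mem hT happ ?_
      rw [Walk.mem_support_append_iff]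
      exact Or.inl (pth hT s m).end_mem_support
    have hSsub : S ⊆ Iset G v m := fun s hs => hSm s hs
    have hSne : S ≠ Iset G v m := fun h => hSnr ⟨m, h.symm⟩
    have hdiff : (Iset G v m \ S).Nonempty := by
      rcases Set.eq_empty_or_nonempty (Iset G v m \ S) with h | h
      · exact absurd (Set.Subset.antisymm hSsub (Set.diff_eq_empty.1 h)) hSne
      · exact h
    obtain ⟨z, hzmem, hzmin⟩ := Set.exists_min_image _ (fun s => (pth hT s v).length)
      (Set.toFinite _) hdiff
    obtain ⟨hzm, hzS⟩ := hzmem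
    have hzm' : z ≠ m := fun h => hzS (h ▸ hmS)
    have hzv : z ≠ v := by
      intro h
      apply hzm'
      apply tle_antisymm hT hzm
      rw [h]; exact tle_top v m
    obtain ⟨w, hadj, hzw, hwz, hfac, hlen⟩ := exists_parent hT hzv
    have hwm : tle G v w m := (hfac m hzm).resolve_left hzm'
    have hwS : w ∈ S := by
      by_contra hwS
      exact absurd (hzmin w ⟨hwm, hwS⟩) (not_le.2 hlen)
    have hSz : S ∩ Iset G v z = ∅ := by
      rw [Set.eq_empty_iff_forall_notMem]
      rintro s ⟨hsS, hsz⟩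
      have hsv : (pth hT s v).IsPath := pth_isPath hT s v
      have hmsup : m ∈ (pth hT s v).support := (tle_iff hT).1 (hSm s hsS)
      have hzsup : z ∈ (pth hT s v).support := (tle_iff hT).1 hsz
      rw [← (pth hT s v).take_spec hmsup, Walk.mem_support_append_iff] at hzsup
      rcases hzsup with h | h
      · have heq : (pth hT s v).takeUntil m hmsup = pth hT s m :=
          pth_eq hT (hsv.takeUntil hmsup)
        rw [heq] at h
        exact hzS (pcl s hsS m hmS z h)
      · have : tle G v m z := tle_of_mem hT (hsv.dropUntil hmsup) h
        exact hzS (by rw [tle_antisymm hT hzm this]; exact hmS)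
    set U := S ∪ Iset G v z with hUdef
    have hwU : w ∈ U := Or.inl hwS
    have hUconn : (G.induce U).Connected := by
      rw [connected_iff]
      refine ⟨?_, ⟨⟨w, hwU⟩⟩⟩
      have key : ∀ (u : ↥U), (G.induce U).Reachable u ⟨w, hwU⟩ := by
        rintro ⟨u, hu⟩
        rcases hu with huS | huz
        · obtain ⟨W⟩ := hSconn.preconnected ⟨u, huS⟩ ⟨w, hwS⟩
          obtain ⟨W', hW'⟩ := walk_down W
          exact reach_up W' (fun x hx => Or.inl (hW' x hx)) (Or.inl huS) hwU
        · have hzsup : z ∈ (pth hT u v).support := (tle_iff hT).1 huz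
          refine reach_up (((pth hT u v).takeUntil z hzsup).append
            (Walk.cons hadj Walk.nil)) ?_ (Or.inr huz) hwU
          intro x hx
          rw [Walk.mem_support_append_iff] at hx
          rcases hx with hx | hx
          · exact Or.inr (seg_le hT hzsup x hx)
          · have hx' : x = z ∨ x = w := by simpa using hx
            rcases hx' with h | h
            · rw [h]; exact Or.inr (self_mem_Iset v z)
            · rw [h]; exact Or.inl hwS
      intro a b
      exact (key a).trans (key b).symm
    have hDsub : ({S, Iset G v z} : Set (Set (Fin n))) ⊆ insert S (Set.range (Iset G v)) := by
      rintro A (rfl | rfl)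
      · exact Set.mem_insert _ _
      · exact Set.mem_insert_of_mem _ ⟨z, rfl⟩
    have hDdisj : ∀ A ∈ ({S, Iset G v z} : Set (Set (Fin n))),
        ∀ B ∈ ({S, Iset G v z} : Set (Set (Fin n))), A ≠ B → A ∩ B = ∅ := by
      rintro A (rfl | rfl) B (rfl | rfl) hne
      · exact absurd rfl hne
      · exact hSz
      · rw [Set.inter_comm]; exact hSz
      · exact absurd rfl hne
    have hcomp := (hnc.2 {S, Iset G v z} hDsub hDdisj S).2 (Or.inl rfl)
    rw [Set.sUnion_pair] at hcomp
    have hUeq := hcomp.2.2 U Set.subset_union_left (le_refl _) hUconn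
    apply hzS
    rw [← hUeq]
    exact Or.inr (self_mem_Iset v z)
end

section
/- Let Γ be a finite tree on vertex set V and let σ be a permutation of V such that for every vertex i, either σ(i) = i or σ(i) is adjacent to i in Γ. Then σ is an involution all of whose non-trivial cycles are transpositions (i j) where {i, j} is an edge of Γ; equivalently, the set of edges {i, σ(i)} over non-fixed points i forms a matching of Γ. -/
open SimpleGraph

private lemma tree_path_length_eq_dist {V : Type*} {G : SimpleGraph V} (hT : G.IsTree)
    {u v : V} (p : G.Walk u v) (hp : p.IsPath) : p.length = G.dist u v := by
  obtain ⟨q, hq, hql⟩ := hT.isConnected.exists_path_of_dist u v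
  have := (hT.existsUnique_path u v).unique hp hq
  rw [this, hql]

/-- In a tree, adjacent vertices have distances to a root differing by exactly one. -/
private lemma tree_adj_dist {V : Type*} [DecidableEq V] {G : SimpleGraph V} (hT : G.IsTree)
    {u v : V} (r : V) (huv : G.Adj u v) :
    G.dist r v = G.dist r u + 1 ∨ G.dist r u = G.dist r v + 1 := by
  obtain ⟨q, hq, hql⟩ := hT.isConnected.exists_path_of_dist r u
  by_cases hv : v ∈ q.support
  · right
    have h1 : (q.takeUntil v hv).length + (q.dropUntil v hv).length = q.length := by
      have := congrArg SimpleGraph.Walk.length (q.take_spec hv)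
      rwa [SimpleGraph.Walk.length_append] at this
    have h2 : G.dist r v ≤ (q.takeUntil v hv).length := SimpleGraph.dist_le _
    have h3 : (q.dropUntil v hv).length ≠ 0 := by
      intro h0
      exact huv.ne' (SimpleGraph.Walk.eq_of_length_eq_zero h0)
    have h4 : G.dist r u ≤ G.dist r v + 1 := by
      have htri := hT.isConnected.dist_triangle (u := r) (v := v) (w := u)
      have : G.dist v u = 1 := SimpleGraph.dist_eq_one_iff_adj.mpr huv.symm
      omega
    omega
  · left
    have hpath : (q.concat huv).IsPath := by
      rw [← SimpleGraph.Walk.isPath_reverse_iff, SimpleGraph.Walk.reverse_concat]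
      exact (hq.reverse).cons (by simpa [SimpleGraph.Walk.support_reverse] using hv)
    have := tree_path_length_eq_dist hT _ hpath
    rw [SimpleGraph.Walk.length_concat, hql] at this
    omega

/-- In a tree, a vertex has a unique neighbor closer to the root. -/
private lemma tree_unique_parent {V : Type*} {G : SimpleGraph V} (hT : G.IsTree)
    {u v w r : V} (huv : G.Adj u v) (hwv : G.Adj w v)
    (hu : G.dist r u + 1 = G.dist r v) (hw : G.dist r w + 1 = G.dist r v) : u = w := by
  obtain ⟨p, hp, hpl⟩ := hT.isConnected.exists_path_of_dist r u
  obtain ⟨q, hq, hql⟩ := hT.isConnected.exists_path_of_dist r w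
  have hp' : (p.concat huv).IsPath := by
    apply SimpleGraph.Walk.isPath_of_length_eq_dist
    rw [SimpleGraph.Walk.length_concat, hpl, hu]
  have hq' : (q.concat hwv).IsPath := by
    apply SimpleGraph.Walk.isPath_of_length_eq_dist
    rw [SimpleGraph.Walk.length_concat, hql, hw]
  have heq : p.concat huv = q.concat hwv := (hT.existsUnique_path r v).unique hp' hq'
  obtain ⟨hv, -⟩ := SimpleGraph.Walk.concat_inj heq
  exact hv

/-- A permutation of the vertices of a finite tree moving every vertex to itself or
to a neighbor is an involution, and its non-fixed 2-cycles form a matching. -/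
theorem perm_adj_involution_matching (V : Type*) [Fintype V] [DecidableEq V]
    (G : SimpleGraph V) (hT : G.IsTree) (σ : Equiv.Perm V)
    (h : ∀ i : V, σ i = i ∨ G.Adj i (σ i)) :
    (∀ i : V, σ (σ i) = i) ∧
    ∀ i j : V, σ i ≠ i → σ j ≠ j → ({i, σ i} : Set V) ≠ {j, σ j} →
      Disjoint ({i, σ i} : Set V) ({j, σ j} : Set V) := by
  have hconn := hT.isConnected
  have key : ∀ i : V, σ (σ i) = i := by
    by_contra hc
    push_neg at hc
    obtain ⟨i0, hi0⟩ := hc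
    obtain ⟨r⟩ := hconn.nonempty
    set S : Finset V := Finset.univ.filter (fun i => σ (σ i) ≠ i) with hS
    have hSne : S.Nonempty := ⟨i0, by simp [hS, hi0]⟩
    obtain ⟨v, hvS, hvmax⟩ := Finset.exists_max_image S (fun i => G.dist r i) hSne
    have hv : σ (σ v) ≠ v := by simpa [hS] using hvS
    have hσv : σ v ≠ v := fun hfix => hv (by rw [hfix, hfix])
    have hadjvu : G.Adj v (σ v) := (h v).resolve_left hσv
    have hadjwv : G.Adj (σ.symm v) v := by
      rcases h (σ.symm v) with hfix | hadj
      · exfalso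
        apply hσv
        rw [σ.apply_symm_apply] at hfix
        calc σ v = σ (σ.symm v) := by rw [← hfix]
          _ = v := σ.apply_symm_apply v
      · rwa [σ.apply_symm_apply] at hadj
    have huS : σ v ∈ S := by
      simp only [hS, Finset.mem_filter, Finset.mem_univ, true_and]
      intro heq
      exact hv (σ.injective heq)
    have hwS : σ.symm v ∈ S := by
      simp only [hS, Finset.mem_filter, Finset.mem_univ, true_and]
      rw [σ.apply_symm_apply]
      intro heq
      apply hv
      rw [heq, σ.apply_symm_apply]
    have hud : G.dist r (σ v) ≤ G.dist r v := hvmax _ huS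
    have hwd : G.dist r (σ.symm v) ≤ G.dist r v := hvmax _ hwS
    have hu1 : G.dist r (σ v) + 1 = G.dist r v := by
      rcases tree_adj_dist hT r hadjvu with h1 | h1 <;> omega
    have hw1 : G.dist r (σ.symm v) + 1 = G.dist r v := by
      rcases tree_adj_dist hT r hadjwv.symm with h1 | h1 <;> omega
    have huw : σ v = σ.symm v := tree_unique_parent hT hadjvu.symm hadjwv hu1 hw1
    exact hv (by rw [huw, σ.apply_symm_apply])
  refine ⟨key, ?_⟩
  intro i j hi hj hne
  rw [Set.disjoint_left]
  intro x hxi hxj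
  simp only [Set.mem_insert_iff, Set.mem_singleton_iff] at hxi hxj
  have hpair : i = j ∨ i = σ j := by
    rcases hxi with rfl | rfl
    · exact hxj
    · rcases hxj with h' | h'
      · exact Or.inr (by rw [← h', key])
      · exact Or.inl (σ.injective h')
  rcases hpair with rfl | rfl
  · exact hne rfl
  · exact hne (by rw [key]; exact Set.pair_comm _ _)
end

section
/- Let Γ be a finite tree on [n] rooted at v, let S ⊆ [n] be connected, and let T = {(a,b) ∈ S × S : a is the parent of b}. For a commutative ring R and elements (y_x)_{x∈S} of R, define for each matching A of the edge set T (viewing T as edges of the induced tree on S) the monomial m_A = Π_{x ∈ S not covered by A} y_x. If M is the S×S matrix with diagonal entries y_x, entries -1 for pairs in T (symmetrically), and 0 otherwise, then det(M) = Σ_{k=0}^{⌊|S|/2⌋} (-1)^k Σ_{A matching of size k} m_A. -/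
open SimpleGraph

/-- `A` is a matching by parent-child pairs inside `S`: each pair `(a,b)` has `a`
the parent of `b`, both in `S`, and distinct pairs share no vertex. -/
def isPCMatching {n : ℕ} (G : SimpleGraph (Fin n)) (v : Fin n) (S : Finset (Fin n))
    (A : Finset (Fin n × Fin n)) : Prop :=
  (∀ p ∈ A, p.1 ∈ S ∧ p.2 ∈ S ∧ covRel G v p.2 p.1) ∧
  (∀ p ∈ A, ∀ q ∈ A, p ≠ q →
    p.1 ≠ q.1 ∧ p.1 ≠ q.2 ∧ p.2 ≠ q.1 ∧ p.2 ≠ q.2)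

section TreeAux

variable {n : ℕ} {G : SimpleGraph (Fin n)} {v : Fin n}

/-- The unique path from `x` to `v` in the tree. -/
noncomputable def tp (hT : G.IsTree) (v x : Fin n) : G.Walk x v :=
  (hT.existsUnique_path x v).choose

lemma tp_isPath (hT : G.IsTree) (v x : Fin n) : (tp hT v x).IsPath :=
  (hT.existsUnique_path x v).choose_spec.1

lemma tp_unique (hT : G.IsTree) {v x : Fin n} (w : G.Walk x v) (hw : w.IsPath) :
    w = tp hT v x :=
  (hT.existsUnique_path x v).choose_spec.2 w hw

lemma tle_mem (hT : G.IsTree) {x y : Fin n} (h : tle G v x y) :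
    y ∈ (tp hT v x).support :=
  h ⟨tp hT v x, tp_isPath hT v x⟩

lemma covRel_ne {x p : Fin n} (h : covRel G v x p) : x ≠ p := h.2.2

lemma cov_step (hT : G.IsTree) {x p : Fin n} (h : covRel G v x p) :
    tp hT v x = SimpleGraph.Walk.cons h.1 (tp hT v p) := by
  have hx : x ∉ (tp hT v p).support := by
    intro hx
    have hQ : ((tp hT v p).dropUntil x hx).IsPath := (tp_isPath hT v p).dropUntil hx
    have hQeq : (tp hT v p).dropUntil x hx = tp hT v x := tp_unique hT _ hQ
    have hpQ : p ∈ ((tp hT v p).dropUntil x hx).support := by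
      rw [hQeq]; exact tle_mem hT h.2.1
    have hspec := (tp hT v p).take_spec hx
    have hnodup := (tp_isPath hT v p).support_nodup
    rw [← hspec, SimpleGraph.Walk.support_append] at hnodup
    rw [List.nodup_append] at hnodup
    have h1 : p ∈ ((tp hT v p).takeUntil x hx).support :=
      SimpleGraph.Walk.start_mem_support _
    have h2 : p ∈ ((tp hT v p).dropUntil x hx).support.tail := by
      have hc := SimpleGraph.Walk.support_eq_cons ((tp hT v p).dropUntil x hx)
      rw [hc] at hpQ
      rcases List.mem_cons.1 hpQ with h' | h'
      · exact absurd h'.symm h.2.2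
      · exact h'
    exact hnodup.2.2 p h1 p h2 rfl
  exact (tp_unique hT _ ((tp_isPath hT v p).cons hx)).symm

/-- depth of a vertex: length of its path to the root -/
noncomputable def dep (hT : G.IsTree) (v x : Fin n) : ℕ := (tp hT v x).length

lemma cov_dep (hT : G.IsTree) {x p : Fin n} (h : covRel G v x p) :
    dep hT v x = dep hT v p + 1 := by
  unfold dep
  rw [cov_step hT h, SimpleGraph.Walk.length_cons]

lemma cov_antisym (hT : G.IsTree) {x p : Fin n} (h1 : covRel G v x p)
    (h2 : covRel G v p x) : False := by
  have := cov_dep hT h1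
  have := cov_dep hT h2
  omega

lemma parent_unique (hT : G.IsTree) {x p q : Fin n} (h1 : covRel G v x p)
    (h2 : covRel G v x q) : p = q := by
  have e1 := cov_step hT h1
  have e2 := cov_step hT h2
  have hsup := congrArg SimpleGraph.Walk.support (e1.symm.trans e2)
  rw [SimpleGraph.Walk.support_cons, SimpleGraph.Walk.support_cons,
    SimpleGraph.Walk.support_eq_cons (tp hT v p),
    SimpleGraph.Walk.support_eq_cons (tp hT v q)] at hsup
  injection hsup with _ hsup
  injection hsup

/-- key: a permutation moving only along cover-edges is an involution -/
lemma invol (hT : G.IsTree) {S : Finset (Fin n)} {σ : Equiv.Perm {x // x ∈ S}}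
    (hP : ∀ i, σ i ≠ i → covRel G v (σ i).1 i.1 ∨ covRel G v i.1 (σ i).1) :
    ∀ i, σ (σ i) = i := by
  classical
  by_contra hc
  push_neg at hc
  obtain ⟨i₀, hi₀⟩ := hc
  set B := Finset.univ.filter (fun i : {x // x ∈ S} => σ (σ i) ≠ i) with hB
  have hne : B.Nonempty := ⟨i₀, by simp [hB, hi₀]⟩
  obtain ⟨i, hiB, hmax⟩ := B.exists_max_image (fun j => dep hT v j.1) hne
  have hBi : σ (σ i) ≠ i := (Finset.mem_filter.1 hiB).2
  have hni : σ i ≠ i := by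
    intro h
    exact hBi (by rw [h, h])
  -- σ i is the parent of i
  have h1 : covRel G v i.1 (σ i).1 := by
    rcases hP i hni with h | h
    · exfalso
      have hmem : σ i ∈ B := by
        simp only [hB, Finset.mem_filter, Finset.mem_univ, true_and]
        intro heq
        exact hBi (σ.injective heq)
      have hle := hmax (σ i) hmem
      have := cov_dep hT h
      omega
    · exact h
  -- σ⁻¹ i is the parent of i
  have happ : σ (σ⁻¹ i) = i := Equiv.apply_symm_apply σ i
  have hni' : σ (σ⁻¹ i) ≠ σ⁻¹ i := by
    rw [happ]
    intro h
    apply hni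
    have hc2 := congrArg σ h
    rw [happ] at hc2
    exact hc2
  have h2 : covRel G v i.1 (σ⁻¹ i).1 := by
    rcases hP (σ⁻¹ i) hni' with h | h
    · rw [happ] at h; exact h
    · exfalso
      rw [happ] at h
      have hmem : σ⁻¹ i ∈ B := by
        simp only [hB, Finset.mem_filter, Finset.mem_univ, true_and]
        intro heq
        rw [happ] at heq
        exact hBi (by rw [heq, happ])
      have hle := hmax (σ⁻¹ i) hmem
      have := cov_dep hT h
      omega
  have : (σ i).1 = (σ⁻¹ i).1 := parent_unique hT h1 h2
  have heq : σ i = σ⁻¹ i := Subtype.ext this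
  exact hBi (by rw [heq, happ])

end TreeAux
section MatchAux

variable {n : ℕ} {G : SimpleGraph (Fin n)} {v : Fin n} {S : Finset (Fin n)}

/-- the swap associated to a pair -/
noncomputable def esw (S : Finset (Fin n)) (p : Fin n × Fin n) :
    Equiv.Perm {x // x ∈ S} :=
  if h : p.1 ∈ S ∧ p.2 ∈ S then Equiv.swap ⟨p.1, h.1⟩ ⟨p.2, h.2⟩ else 1

open scoped Classical in
/-- the permutation associated to a matching -/
noncomputable def Phi (S : Finset (Fin n)) (A : Finset (Fin n × Fin n))
    (G : SimpleGraph (Fin n)) : Equiv.Perm {x // x ∈ S} :=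
  if h : (A : Set (Fin n × Fin n)).Pairwise
      (fun p q => Commute (esw S p) (esw S q)) then
    A.noncommProd (esw S) h
  else 1

lemma pc_subset {A B : Finset (Fin n × Fin n)} (hA : isPCMatching G v S A)
    (h : B ⊆ A) : isPCMatching G v S B :=
  ⟨fun p hp => hA.1 p (h hp), fun p hp q hq => hA.2 p (h hp) q (h hq)⟩

lemma pc_comm {A : Finset (Fin n × Fin n)} (hA : isPCMatching G v S A) :
    (A : Set (Fin n × Fin n)).Pairwise
      (fun p q => Commute (esw S p) (esw S q)) := by
  intro p hp q hq hpq
  rw [Finset.mem_coe] at hp hq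
  obtain ⟨hp1, hp2, _⟩ := hA.1 p hp
  obtain ⟨hq1, hq2, _⟩ := hA.1 q hq
  obtain ⟨h11, h12, h21, h22⟩ := hA.2 p hp q hq hpq
  rw [esw, dif_pos ⟨hp1, hp2⟩, esw, dif_pos ⟨hq1, hq2⟩]
  apply Equiv.Perm.Disjoint.commute
  intro x
  by_cases hx1 : x = (⟨p.1, hp1⟩ : {x // x ∈ S})
  · right
    apply Equiv.swap_apply_of_ne_of_ne
    · rw [hx1]; exact fun h => h11 (congrArg Subtype.val h)
    · rw [hx1]; exact fun h => h12 (congrArg Subtype.val h)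
  · by_cases hx2 : x = (⟨p.2, hp2⟩ : {x // x ∈ S})
    · right
      apply Equiv.swap_apply_of_ne_of_ne
      · rw [hx2]; exact fun h => h21 (congrArg Subtype.val h)
      · rw [hx2]; exact fun h => h22 (congrArg Subtype.val h)
    · left
      exact Equiv.swap_apply_of_ne_of_ne hx1 hx2

lemma phi_empty : Phi S (∅ : Finset (Fin n × Fin n)) G = 1 := by
  rw [Phi, dif_pos (by simp)]
  exact Finset.noncommProd_empty _ _

lemma phi_insert {A : Finset (Fin n × Fin n)} {p : Fin n × Fin n}
    (hA : isPCMatching G v S (insert p A)) (hp : p ∉ A) :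
    Phi S (insert p A) G = esw S p * Phi S A G := by
  have h1 := pc_comm hA
  have h2 := pc_comm (pc_subset hA (Finset.subset_insert p A))
  rw [Phi, dif_pos h1, Phi, dif_pos h2]
  exact Finset.noncommProd_insert_of_notMem _ _ _ _ hp

lemma phi_notmem {A : Finset (Fin n × Fin n)} (hA : isPCMatching G v S A)
    (i : {x // x ∈ S}) (hi : ∀ p ∈ A, i.1 ≠ p.1 ∧ i.1 ≠ p.2) :
    Phi S A G i = i := by
  classical
  induction A using Finset.induction_on with
  | empty => rw [phi_empty]; rfl
  | insert q A' hq ih =>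
    rw [phi_insert hA hq, Equiv.Perm.mul_apply,
      ih (pc_subset hA (Finset.subset_insert q A'))
        (fun p hp => hi p (Finset.mem_insert_of_mem hp))]
    obtain ⟨hq1, hq2, _⟩ := hA.1 q (Finset.mem_insert_self q A')
    rw [esw, dif_pos ⟨hq1, hq2⟩]
    apply Equiv.swap_apply_of_ne_of_ne
    · exact fun h => (hi q (Finset.mem_insert_self q A')).1 (congrArg Subtype.val h)
    · exact fun h => (hi q (Finset.mem_insert_self q A')).2 (congrArg Subtype.val h)

lemma phi_fst {A : Finset (Fin n × Fin n)} (hA : isPCMatching G v S A)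
    {p : Fin n × Fin n} (hp : p ∈ A) (h1 : p.1 ∈ S) (h2 : p.2 ∈ S) :
    Phi S A G ⟨p.1, h1⟩ = ⟨p.2, h2⟩ := by
  classical
  induction A using Finset.induction_on with
  | empty => exact absurd hp (Finset.notMem_empty p)
  | insert q A' hq ih =>
    have hA' := pc_subset hA (Finset.subset_insert q A')
    obtain ⟨hq1, hq2, _⟩ := hA.1 q (Finset.mem_insert_self q A')
    rw [phi_insert hA hq, Equiv.Perm.mul_apply]
    rcases Finset.mem_insert.1 hp with rfl | hp'
    · rw [phi_notmem hA' ⟨p.1, h1⟩ (fun r hr => by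
        have hne : p ≠ r := fun h => hq (h ▸ hr)
        obtain ⟨a, b, _, _⟩ := hA.2 p (Finset.mem_insert_self p A') r
          (Finset.mem_insert_of_mem hr) hne
        exact ⟨a, b⟩)]
      rw [esw, dif_pos ⟨hq1, hq2⟩]
      exact Equiv.swap_apply_left _ _
    · rw [ih hA' hp']
      have hne : p ≠ q := fun h => hq (h ▸ hp')
      obtain ⟨_, _, h3, h4⟩ := hA.2 p (Finset.mem_insert_of_mem hp') q
        (Finset.mem_insert_self q A') hne
      rw [esw, dif_pos ⟨hq1, hq2⟩]
      apply Equiv.swap_apply_of_ne_of_ne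
      · exact fun h => h3 (congrArg Subtype.val h)
      · exact fun h => h4 (congrArg Subtype.val h)

lemma phi_snd {A : Finset (Fin n × Fin n)} (hA : isPCMatching G v S A)
    {p : Fin n × Fin n} (hp : p ∈ A) (h1 : p.1 ∈ S) (h2 : p.2 ∈ S) :
    Phi S A G ⟨p.2, h2⟩ = ⟨p.1, h1⟩ := by
  classical
  induction A using Finset.induction_on with
  | empty => exact absurd hp (Finset.notMem_empty p)
  | insert q A' hq ih =>
    have hA' := pc_subset hA (Finset.subset_insert q A')
    obtain ⟨hq1, hq2, _⟩ := hA.1 q (Finset.mem_insert_self q A')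
    rw [phi_insert hA hq, Equiv.Perm.mul_apply]
    rcases Finset.mem_insert.1 hp with rfl | hp'
    · rw [phi_notmem hA' ⟨p.2, h2⟩ (fun r hr => by
        have hne : p ≠ r := fun h => hq (h ▸ hr)
        obtain ⟨_, _, a, b⟩ := hA.2 p (Finset.mem_insert_self p A') r
          (Finset.mem_insert_of_mem hr) hne
        exact ⟨a, b⟩)]
      rw [esw, dif_pos ⟨hq1, hq2⟩]
      exact Equiv.swap_apply_right _ _
    · rw [ih hA' hp']
      have hne : p ≠ q := fun h => hq (h ▸ hp')
      obtain ⟨h3, h4, _, _⟩ := hA.2 p (Finset.mem_insert_of_mem hp') q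
        (Finset.mem_insert_self q A') hne
      rw [esw, dif_pos ⟨hq1, hq2⟩]
      apply Equiv.swap_apply_of_ne_of_ne
      · exact fun h => h3 (congrArg Subtype.val h)
      · exact fun h => h4 (congrArg Subtype.val h)

lemma sign_phi {A : Finset (Fin n × Fin n)} (hA : isPCMatching G v S A) :
    Equiv.Perm.sign (Phi S A G) = (-1) ^ A.card := by
  classical
  induction A using Finset.induction_on with
  | empty => rw [phi_empty]; simp
  | insert q A' hq ih =>
    obtain ⟨hq1, hq2, hqc⟩ := hA.1 q (Finset.mem_insert_self q A')
    rw [phi_insert hA hq, map_mul, ih (pc_subset hA (Finset.subset_insert q A')),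
      Finset.card_insert_of_notMem hq]
    rw [esw, dif_pos ⟨hq1, hq2⟩, Equiv.Perm.sign_swap
      (fun h => (covRel_ne hqc) (congrArg Subtype.val h).symm)]
    rw [pow_add, pow_one, mul_comm]

end MatchAux
section BijAux

variable {n : ℕ} {G : SimpleGraph (Fin n)} {v : Fin n} {S : Finset (Fin n)}

lemma card_cov {A : Finset (Fin n × Fin n)} (hA : isPCMatching G v S A) :
    (S.filter (fun x => ¬ ∀ p ∈ A, x ≠ p.1 ∧ x ≠ p.2)).card = 2 * A.card := by
  classical
  have heq : S.filter (fun x => ¬ ∀ p ∈ A, x ≠ p.1 ∧ x ≠ p.2)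
      = A.biUnion (fun p => {p.1, p.2}) := by
    ext x
    simp only [Finset.mem_filter, Finset.mem_biUnion, Finset.mem_insert,
      Finset.mem_singleton]
    push_neg
    constructor
    · rintro ⟨_, p, hp, hx⟩
      refine ⟨p, hp, ?_⟩
      by_cases h : x = p.1
      · exact Or.inl h
      · exact Or.inr (hx h)
    · rintro ⟨p, hp, hx⟩
      obtain ⟨h1, h2, _⟩ := hA.1 p hp
      rcases hx with h | h
      · exact ⟨h ▸ h1, p, hp, fun hc => absurd h hc⟩
      · exact ⟨h ▸ h2, p, hp, fun _ => h⟩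
  rw [heq, Finset.card_biUnion]
  · have h2 : ∀ p ∈ A, ({p.1, p.2} : Finset (Fin n)).card = 2 := fun p hp => by
      rw [Finset.card_insert_of_notMem (by
        simp only [Finset.mem_singleton]
        exact fun h => covRel_ne (hA.1 p hp).2.2 h.symm), Finset.card_singleton]
    rw [Finset.sum_congr rfl h2, Finset.sum_const, smul_eq_mul, mul_comm]
  · intro p hp q hq hpq
    obtain ⟨h11, h12, h21, h22⟩ := hA.2 p hp q hq hpq
    rw [Function.onFun, Finset.disjoint_left]
    intro x hx hx'
    simp only [Finset.mem_insert, Finset.mem_singleton] at hx hx'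
    rcases hx with rfl | rfl <;> rcases hx' with h | h <;> simp_all

lemma endpoint_of_ne {A : Finset (Fin n × Fin n)} (hA : isPCMatching G v S A)
    {i : {x // x ∈ S}} (hne : Phi S A G i ≠ i) :
    ∃ p ∈ A, i.1 = p.1 ∨ i.1 = p.2 := by
  by_contra hcon
  push_neg at hcon
  exact hne (phi_notmem hA i (fun p hp => ⟨(hcon p hp).1, (hcon p hp).2⟩))

lemma phi_mem_filter {A : Finset (Fin n × Fin n)} (hA : isPCMatching G v S A) :
    ∀ i : {x // x ∈ S}, Phi S A G i ≠ i →
      covRel G v (Phi S A G i).1 i.1 ∨ covRel G v i.1 (Phi S A G i).1 := by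
  intro i hne
  obtain ⟨p, hp, hcase⟩ := endpoint_of_ne hA hne
  obtain ⟨h1, h2, hcov⟩ := hA.1 p hp
  rcases hcase with h | h
  · left
    have hi : i = ⟨p.1, h1⟩ := Subtype.ext h
    rw [hi, phi_fst hA hp h1 h2]
    exact hcov
  · right
    have hi : i = ⟨p.2, h2⟩ := Subtype.ext h
    rw [hi, phi_snd hA hp h1 h2]
    exact hcov

open scoped Classical in
/-- the matching associated to a permutation -/
noncomputable def Psi (G : SimpleGraph (Fin n)) (v : Fin n) (S : Finset (Fin n))
    (σ : Equiv.Perm {x // x ∈ S}) : Finset (Fin n × Fin n) :=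
  (Finset.univ.filter (fun i : {x // x ∈ S} => covRel G v (σ i).1 i.1)).image
    (fun i => (i.1, (σ i).1))

lemma mem_Psi {σ : Equiv.Perm {x // x ∈ S}} {q : Fin n × Fin n} :
    q ∈ Psi G v S σ ↔ ∃ i, covRel G v (σ i).1 i.1 ∧ (i.1, (σ i).1) = q := by
  simp [Psi, Finset.mem_image, Finset.mem_filter]

lemma psi_pc (hT : G.IsTree) {σ : Equiv.Perm {x // x ∈ S}}
    (hP : ∀ i, σ i ≠ i → covRel G v (σ i).1 i.1 ∨ covRel G v i.1 (σ i).1) :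
    isPCMatching G v S (Psi G v S σ) ∧ Psi G v S σ ⊆ S ×ˢ S := by
  have hinv := invol hT hP
  refine ⟨⟨?_, ?_⟩, ?_⟩
  · rintro p hp
    obtain ⟨i, hcov, rfl⟩ := mem_Psi.1 hp
    exact ⟨i.2, (σ i).2, hcov⟩
  · rintro p hp q hq hpq
    obtain ⟨i, hci, rfl⟩ := mem_Psi.1 hp
    obtain ⟨j, hcj, rfl⟩ := mem_Psi.1 hq
    have hij : i ≠ j := fun h => hpq (by rw [h])
    refine ⟨fun h => hij (Subtype.ext h), ?_, ?_, fun h => hij (σ.injective (Subtype.ext h))⟩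
    · intro h
      have hh : i = σ j := Subtype.ext h
      rw [hh, hinv j] at hci
      exact (cov_antisym hT hci hcj).elim
    · intro h
      have hh : σ i = j := Subtype.ext h
      rw [← hh, hinv i] at hcj
      exact (cov_antisym hT hcj hci).elim
  · intro p hp
    obtain ⟨i, _, rfl⟩ := mem_Psi.1 hp
    exact Finset.mem_product.2 ⟨i.2, (σ i).2⟩

lemma psi_phi (hT : G.IsTree) {A : Finset (Fin n × Fin n)}
    (hA : isPCMatching G v S A) : Psi G v S (Phi S A G) = A := by
  ext q
  rw [mem_Psi]
  constructor
  · rintro ⟨i, hcov, rfl⟩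
    have hne : Phi S A G i ≠ i := by
      intro h
      rw [h] at hcov
      exact covRel_ne hcov rfl
    obtain ⟨p, hp, hcase⟩ := endpoint_of_ne hA hne
    obtain ⟨h1, h2, hcovp⟩ := hA.1 p hp
    rcases hcase with h | h
    · have hi : i = ⟨p.1, h1⟩ := Subtype.ext h
      rw [hi, phi_fst hA hp h1 h2]
      simpa using hp
    · have hi : i = ⟨p.2, h2⟩ := Subtype.ext h
      rw [hi, phi_snd hA hp h1 h2] at hcov
      exact (cov_antisym hT hcov hcovp).elim
  · intro hq
    obtain ⟨h1, h2, hcovq⟩ := hA.1 q hq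
    refine ⟨⟨q.1, h1⟩, ?_, ?_⟩
    · rw [phi_fst hA hq h1 h2]
      exact hcovq
    · rw [phi_fst hA hq h1 h2]

lemma phi_psi (hT : G.IsTree) {σ : Equiv.Perm {x // x ∈ S}}
    (hP : ∀ i, σ i ≠ i → covRel G v (σ i).1 i.1 ∨ covRel G v i.1 (σ i).1) :
    Phi S (Psi G v S σ) G = σ := by
  have hinv := invol hT hP
  have hpc : isPCMatching G v S (Psi G v S σ) := (psi_pc hT hP).1
  apply Equiv.ext
  intro i
  by_cases hfix : σ i = i
  · rw [hfix]
    apply phi_notmem hpc i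
    intro q hq
    obtain ⟨j, hcj, rfl⟩ := mem_Psi.1 hq
    have hjne : σ j ≠ j := by
      intro h
      rw [h] at hcj
      exact covRel_ne hcj rfl
    constructor
    · intro h
      exact hjne (by rw [← Subtype.ext h]; exact hfix)
    · intro h
      have hij : i = σ j := Subtype.ext h
      have h2 : σ i = j := by rw [hij]; exact hinv j
      rw [hfix] at h2
      exact hjne (by rw [← h2]; exact hfix)
  · rcases hP i hfix with hcy | hcy
    · have hq : (i.1, (σ i).1) ∈ Psi G v S σ := mem_Psi.2 ⟨i, hcy, rfl⟩
      exact phi_fst hpc hq i.2 (σ i).2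
    · have hcj : covRel G v (σ (σ i)).1 (σ i).1 := by rw [hinv i]; exact hcy
      have hq : ((σ i).1, (σ (σ i)).1) ∈ Psi G v S σ := mem_Psi.2 ⟨σ i, hcj, rfl⟩
      have hres : Phi S (Psi G v S σ) G (σ (σ i)) = σ i :=
        phi_snd hpc hq (σ i).2 (σ (σ i)).2
      rw [hinv i] at hres
      exact hres

end BijAux
section TermEq

variable {n : ℕ} {G : SimpleGraph (Fin n)} {v : Fin n} {S : Finset (Fin n)}

open scoped Classical in
lemma term_eq {A : Finset (Fin n × Fin n)} (hA : isPCMatching G v S A)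
    {R : Type*} [CommRing R] (y : Fin n → R) :
    (Equiv.Perm.sign (Phi S A G)) •
      (∏ i : {x // x ∈ S}, (Matrix.of fun a b : {x // x ∈ S} =>
        if a = b then y a.1
        else if covRel G v a.1 b.1 ∨ covRel G v b.1 a.1 then (-1 : R) else 0)
        (Phi S A G i) i)
    = (-1 : R) ^ A.card *
        ∏ x ∈ S.filter (fun x => ∀ p ∈ A, x ≠ p.1 ∧ x ≠ p.2), y x := by
  classical
  have hprod : (∏ i : {x // x ∈ S}, (Matrix.of fun a b : {x // x ∈ S} =>
        if a = b then y a.1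
        else if covRel G v a.1 b.1 ∨ covRel G v b.1 a.1 then (-1 : R) else 0)
        (Phi S A G i) i)
      = ∏ x ∈ S, (if (∀ p ∈ A, x ≠ p.1 ∧ x ≠ p.2) then y x else -1) := by
    rw [← Finset.prod_attach S (fun x => if (∀ p ∈ A, x ≠ p.1 ∧ x ≠ p.2) then y x else -1),
      Finset.univ_eq_attach]
    apply Finset.prod_congr rfl
    intro i _
    by_cases hun : ∀ p ∈ A, i.1 ≠ p.1 ∧ i.1 ≠ p.2
    · rw [if_pos hun, phi_notmem hA i hun, Matrix.of_apply, if_pos rfl]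
    · rw [if_neg hun]
      push_neg at hun
      obtain ⟨p, hp, himp⟩ := hun
      obtain ⟨h1, h2, hcov⟩ := hA.1 p hp
      by_cases h : i.1 = p.1
      · have hi : i = ⟨p.1, h1⟩ := Subtype.ext h
        rw [hi, phi_fst hA hp h1 h2, Matrix.of_apply,
          if_neg (fun hc => covRel_ne hcov (congrArg Subtype.val hc)),
          if_pos (Or.inl hcov)]
      · have hi : i = ⟨p.2, h2⟩ := Subtype.ext (himp h)
        rw [hi, phi_snd hA hp h1 h2, Matrix.of_apply,
          if_neg (fun hc => covRel_ne hcov ((congrArg Subtype.val hc)).symm),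
          if_pos (Or.inr hcov)]
  rw [hprod, Finset.prod_ite, Finset.prod_const, card_cov hA,
    pow_mul, neg_one_sq, one_pow, mul_one, sign_phi hA, Units.smul_def, zsmul_eq_mul]
  push_cast
  ring
end TermEq

open scoped Classical in
/-- Determinant expansion over matchings of the induced subtree on a connected set S. -/
theorem det_induced_subtree_matchings {n : ℕ} (G : SimpleGraph (Fin n)) (hT : G.IsTree)
    (v : Fin n) (S : Finset (Fin n))
    (hconn : (G.induce (S : Set (Fin n))).Connected)
    (R : Type*) [CommRing R] (y : Fin n → R) :
    Matrix.det (Matrix.of fun a b : {x // x ∈ S} =>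
        if a = b then y a.1
        else if covRel G v a.1 b.1 ∨ covRel G v b.1 a.1 then -1 else 0) =
      ∑ k ∈ Finset.range (S.card / 2 + 1), (-1 : R) ^ k *
        ∑ A ∈ (S ×ˢ S).powerset.filter
            (fun A => isPCMatching G v S A ∧ A.card = k),
          ∏ x ∈ S.filter (fun x => ∀ p ∈ A, x ≠ p.1 ∧ x ≠ p.2), y x := by
  classical
  -- the set of all matchings
  set 𝓜 : Finset (Finset (Fin n × Fin n)) :=
    (S ×ˢ S).powerset.filter (fun A => isPCMatching G v S A) with h𝓜
  have hbound : ∀ A ∈ 𝓜, A.card ∈ Finset.range (S.card / 2 + 1) := by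
    intro A hA
    rw [h𝓜, Finset.mem_filter] at hA
    have hcc := card_cov (v := v) hA.2
    have hle := Finset.card_filter_le S (fun x => ¬ ∀ p ∈ A, x ≠ p.1 ∧ x ≠ p.2)
    rw [Finset.mem_range]
    omega
  -- collapse the RHS into a single sum over matchings
  have hRHS : (∑ k ∈ Finset.range (S.card / 2 + 1), (-1 : R) ^ k *
        ∑ A ∈ (S ×ˢ S).powerset.filter
            (fun A => isPCMatching G v S A ∧ A.card = k),
          ∏ x ∈ S.filter (fun x => ∀ p ∈ A, x ≠ p.1 ∧ x ≠ p.2), y x)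
      = ∑ A ∈ 𝓜, (-1 : R) ^ A.card *
          ∏ x ∈ S.filter (fun x => ∀ p ∈ A, x ≠ p.1 ∧ x ≠ p.2), y x := by
    rw [← Finset.sum_fiberwise_of_maps_to hbound
      (fun A => (-1 : R) ^ A.card *
        ∏ x ∈ S.filter (fun x => ∀ p ∈ A, x ≠ p.1 ∧ x ≠ p.2), y x)]
    apply Finset.sum_congr rfl
    intro k _
    rw [Finset.mul_sum]
    have hfil : 𝓜.filter (fun A => A.card = k)
        = (S ×ˢ S).powerset.filter
            (fun A => isPCMatching G v S A ∧ A.card = k) := by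
      rw [h𝓜, Finset.filter_filter]
    rw [hfil]
    apply Finset.sum_congr rfl
    intro A hA
    rw [(Finset.mem_filter.1 hA).2.2]
  rw [hRHS, Matrix.det_apply]
  -- discard permutations not moving along cover edges
  set f : Equiv.Perm {x // x ∈ S} → R := fun σ =>
    Equiv.Perm.sign σ • ∏ i, (Matrix.of fun a b : {x // x ∈ S} =>
      if a = b then y a.1
      else if covRel G v a.1 b.1 ∨ covRel G v b.1 a.1 then (-1 : R) else 0) (σ i) i
    with hf
  show ∑ σ : Equiv.Perm {x // x ∈ S}, f σ = _
  have hstep : ∑ σ ∈ Finset.univ.filter (fun σ : Equiv.Perm {x // x ∈ S} =>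
      ∀ i, σ i ≠ i → covRel G v (σ i).1 i.1 ∨ covRel G v i.1 (σ i).1), f σ
      = ∑ σ : Equiv.Perm {x // x ∈ S}, f σ := by
    apply Finset.sum_filter_of_ne
    intro σ _ hne
    by_contra hcon
    push_neg at hcon
    obtain ⟨i, hi1, hi2, hi3⟩ := hcon
    apply hne
    simp only [hf]
    have hzero : (Matrix.of fun a b : {x // x ∈ S} =>
        if a = b then y a.1
        else if covRel G v a.1 b.1 ∨ covRel G v b.1 a.1 then (-1 : R) else 0) (σ i) i
        = 0 := by
      rw [Matrix.of_apply, if_neg hi1, if_neg (by tauto)]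
    have hp0 : (∏ j : {x // x ∈ S}, (Matrix.of fun a b : {x // x ∈ S} =>
        if a = b then y a.1
        else if covRel G v a.1 b.1 ∨ covRel G v b.1 a.1 then (-1 : R) else 0) (σ j) j) = 0 :=
      Finset.prod_eq_zero (Finset.mem_univ i) hzero
    rw [hp0, smul_zero]
  rw [← hstep]
  refine (Finset.sum_nbij' (fun A => Phi S A G) (Psi G v S) ?_ ?_ ?_ ?_ ?_).symm
  · -- Phi maps matchings into the filter
    intro A hA
    rw [h𝓜, Finset.mem_filter] at hA
    rw [Finset.mem_filter]
    exact ⟨Finset.mem_univ _, phi_mem_filter hA.2⟩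
  · -- Psi maps the filter into matchings
    intro σ hσ
    rw [Finset.mem_filter] at hσ
    obtain ⟨hpc, hsub⟩ := psi_pc hT hσ.2
    rw [h𝓜, Finset.mem_filter]
    exact ⟨Finset.mem_powerset.2 hsub, hpc⟩
  · intro A hA
    rw [h𝓜, Finset.mem_filter] at hA
    exact psi_phi hT hA.2
  · intro σ hσ
    rw [Finset.mem_filter] at hσ
    exact phi_psi hT hσ.2
  · intro A hA
    rw [h𝓜, Finset.mem_filter] at hA
    simp only [hf]
    exact (term_eq hA.2 y).symm
end
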